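/- arXiv:2111.15553 — 3 statements merged into one kernel-verified Lean document; each statement's English description precedes it below -/
import Mathlib

section
/- In a complete regular semimetric space, every compact subset is closed. -/
open Set Filter Topology ENNReal

namespace Semimetric

variable {X : Type*}

/-- Ball of radius `r` centered at `p`. -/
def Ball (d : X → X → ℝ) (p : X) (r : ℝ) : Set X := {x | d x p < r}

/-- A set is open iff each of its points is interior. -/
def IsOpenS (d : X → X → ℝ) (U : Set X) : Prop := ∀ p ∈ U, ∃ r > (0:ℝ), Ball d p r ⊆ U

def IsClosedS (d : X → X → ℝ) (A : Set X) : Prop := IsOpenS d Aᶜ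

/-- Compactness in the ball-generated topology. -/
def IsCompactS (d : X → X → ℝ) (H : Set X) : Prop :=
  ∀ C : Set (Set X), (∀ U ∈ C, IsOpenS d U) → H ⊆ ⋃₀ C →
    ∃ F ⊆ C, F.Finite ∧ H ⊆ ⋃₀ F

/-- Total boundedness: finite ε-nets exist for every ε > 0. -/
def TotBddS (d : X → X → ℝ) (H : Set X) : Prop :=
  ∀ ε > (0:ℝ), ∃ P : Finset X, H ⊆ ⋃ p ∈ P, Ball d p ε

/-- Boundedness: finite diameter. -/
def BoundedS (d : X → X → ℝ) (A : Set X) : Prop := ∃ M : ℝ, ∀ x ∈ A, ∀ y ∈ A, d x y ≤ M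

def IsCauchyS (d : X → X → ℝ) (x : ℕ → X) : Prop :=
  ∀ ε > (0:ℝ), ∃ N, ∀ m ≥ N, ∀ n ≥ N, d (x m) (x n) < ε

def ConvTo (d : X → X → ℝ) (x : ℕ → X) (p : X) : Prop :=
  Tendsto (fun n => d (x n) p) atTop (nhds 0)

def IsCompleteS (d : X → X → ℝ) : Prop :=
  ∀ x : ℕ → X, IsCauchyS d x → ∃ p, ConvTo d x p

/-- Extended-real-valued triangle function for the semimetric `d`. -/
def IsTriangleFun (d : X → X → ℝ) (Φ : ℝ → ℝ → ℝ≥0∞) : Prop :=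
  (∀ u v, Φ u v = Φ v u) ∧
  (∀ u₁ u₂ v, 0 ≤ u₁ → u₁ ≤ u₂ → 0 ≤ v → Φ u₁ v ≤ Φ u₂ v) ∧
  Φ 0 0 = 0 ∧
  ∀ x y z : X, ENNReal.ofReal (d x y) ≤ Φ (d x z) (d z y)

/-- Regularity: continuity at (0,0) (within the nonnegative quadrant). -/
def RegularAt00 (Φ : ℝ → ℝ → ℝ≥0∞) : Prop :=
  ContinuousWithinAt (fun p : ℝ × ℝ => Φ p.1 p.2) (Set.Ici 0 ×ˢ Set.Ici 0) (0, 0)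

/-- Real-valued triangle function for the semimetric `d`. -/
def IsTriangleFunR (d : X → X → ℝ) (Φ : ℝ → ℝ → ℝ) : Prop :=
  (∀ u v, Φ u v = Φ v u) ∧
  (∀ u₁ u₂ v, 0 ≤ u₁ → u₁ ≤ u₂ → 0 ≤ v → Φ u₁ v ≤ Φ u₂ v) ∧
  (∀ u v, 0 ≤ u → 0 ≤ v → 0 ≤ Φ u v) ∧
  Φ 0 0 = 0 ∧
  ∀ x y z : X, d x y ≤ Φ (d x z) (d z y)

/-- The basic triangle function of `d`. -/
noncomputable def PhiBasic (d : X → X → ℝ) (u v : ℝ) : ℝ≥0∞ :=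
  sSup {e | ∃ x y p : X, d p x ≤ u ∧ d p y ≤ v ∧ e = ENNReal.ofReal (d x y)}

/-- The Hausdorff–Pompeiu distance of two sets. -/
noncomputable def HD (d : X → X → ℝ) (A B : Set X) : ℝ≥0∞ :=
  sInf {ε : ℝ≥0∞ | 0 < ε ∧ (∀ a ∈ A, ∃ b ∈ B, ENNReal.ofReal (d a b) < ε) ∧
    (∀ b ∈ B, ∃ a ∈ A, ENNReal.ofReal (d b a) < ε)}

/-- Comparison function: increasing on ℝ₊, nonnegative, iterates tend to 0. -/
def IsComparison (φ : ℝ → ℝ) : Prop :=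
  (∀ t, 0 ≤ t → 0 ≤ φ t) ∧
  (∀ s t, 0 ≤ s → s ≤ t → φ s ≤ φ t) ∧
  ∀ t > (0:ℝ), Tendsto (fun n => φ^[n] t) atTop (nhds 0)

/-- φ-contraction. -/
def IsContraction (d : X → X → ℝ) (φ : ℝ → ℝ) (T : X → X) : Prop :=
  ∀ x y, d (T x) (T y) ≤ φ (d x y)

/-- ψ(t) = sup { s ≥ 0 : s ≤ Φ(t, φ(s)) }. -/
noncomputable def Psi (Φ : ℝ → ℝ → ℝ≥0∞) (φ : ℝ → ℝ) (t : ℝ) : ℝ≥0∞ :=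
  sSup {e | ∃ s : ℝ, 0 ≤ s ∧ ENNReal.ofReal s ≤ Φ t (φ s) ∧ e = ENNReal.ofReal s}

end Semimetric

/-!
Balls of a semimetric need not be open, but regularity of `Φ` at `(0,0)` makes their interiors
open, and it separates points: if `0 < d x p`, then `Φ < d x p` on `[0, δ)²` for some `δ > 0`, so
the triangle inequality forces the `δ`-balls about `x` and `p` to be disjoint. For `p ∉ H`, cover
`H` by the interiors of such balls about its points; a finite subcover and the least of its radii
give a ball about `p` missing `H`.
-/

theorem Set.Finite.exists_pos_forall_le {ι : Type*} {s : Set ι} (hs : s.Finite) {f : ι → ℝ}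
    (hf : ∀ i ∈ s, 0 < f i) : ∃ η > 0, ∀ i ∈ s, η ≤ f i := by
  have hsmall : ∀ᶠ η in 𝓝[>] (0 : ℝ), ∀ i ∈ s, η ≤ f i :=
    hs.eventually_all.2 fun i hi => nhdsWithin_le_nhds (eventually_le_nhds (hf i hi))
  exact ((eventually_mem_nhdsWithin (a := (0 : ℝ)) (s := Ioi 0)).and hsmall).exists

namespace Semimetric

variable {X : Type*} {d : X → X → ℝ} {Φ : ℝ → ℝ → ℝ≥0∞}

theorem exists_pos_forall_lt_of_regularAt00 (hreg : RegularAt00 Φ) (h00 : Φ 0 0 = 0)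
    {c : ℝ≥0∞} (hc : 0 < c) :
    ∃ δ > (0 : ℝ), ∀ u v : ℝ, 0 ≤ u → u < δ → 0 ≤ v → v < δ → Φ u v < c := by
  have hnhds : {q : ℝ × ℝ | Φ q.1 q.2 < c} ∈ 𝓝[Ici 0 ×ˢ Ici 0] ((0 : ℝ), (0 : ℝ)) :=
    hreg (Iio_mem_nhds (show Φ 0 0 < c by rwa [h00]))
  obtain ⟨ε, hε, hsub⟩ := Metric.mem_nhdsWithin_iff.1 hnhds
  refine ⟨ε, hε, fun u v hu huε hv hvε => hsub (a := (u, v)) ⟨?_, mem_Ici.2 hu, mem_Ici.2 hv⟩⟩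
  simp only [Metric.mem_ball, Prod.dist_eq, Real.dist_eq, sub_zero, abs_of_nonneg hu,
    abs_of_nonneg hv]
  exact max_lt huε hvε

def interiorS (d : X → X → ℝ) (S : Set X) : Set X := {y | ∃ r > (0 : ℝ), Ball d y r ⊆ S}

theorem interiorS_subset (hself : ∀ x, d x x = 0) (S : Set X) : interiorS d S ⊆ S :=
  fun y ⟨r, hr, hsub⟩ => hsub (show d y y < r by rwa [hself])

section Triangle

variable (hpos : ∀ x y, 0 ≤ d x y)
  (htri : ∀ x y z : X, ENNReal.ofReal (d x y) ≤ Φ (d x z) (d z y))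
  (hreg : RegularAt00 Φ) (h00 : Φ 0 0 = 0)
include hpos htri hreg h00

theorem isOpenS_interiorS (S : Set X) : IsOpenS d (interiorS d S) := by
  rintro y ⟨r, hr, hsub⟩
  obtain ⟨δ, hδ, hΦδ⟩ := exists_pos_forall_lt_of_regularAt00 hreg h00 (ofReal_pos.2 hr)
  refine ⟨δ, hδ, fun z hz => ⟨δ, hδ, fun w hw => hsub ?_⟩⟩
  exact (ofReal_lt_ofReal_iff hr).1
    ((htri w y z).trans_lt (hΦδ _ _ (hpos _ _) hw (hpos _ _) hz))

theorem exists_disjoint_balls (hsymm : ∀ x y, d x y = d y x) {x p : X} (hxp : 0 < d x p) :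
    ∃ δ > (0 : ℝ), Disjoint (Ball d x δ) (Ball d p δ) := by
  obtain ⟨δ, hδ, hΦδ⟩ := exists_pos_forall_lt_of_regularAt00 hreg h00 (ofReal_pos.2 hxp)
  refine ⟨δ, hδ, Set.disjoint_left.2 fun y (hyx : d y x < δ) (hyp : d y p < δ) => ?_⟩
  have hlt := hΦδ (d x y) (d y p) (hpos _ _) (hsymm x y ▸ hyx) (hpos _ _) hyp
  exact (htri x p y).not_gt hlt

end Triangle

theorem IsCompactS.exists_finite_subcover {H : Set X} (hH : IsCompactS d H) {U : X → Set X}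
    (hU : ∀ x ∈ H, IsOpenS d (U x)) (hxU : ∀ x ∈ H, x ∈ U x) :
    ∃ t ⊆ H, t.Finite ∧ H ⊆ ⋃ x ∈ t, U x := by
  have hcover : H ⊆ ⋃₀ (U '' H) := fun x hx => ⟨U x, mem_image_of_mem U hx, hxU x hx⟩
  obtain ⟨t, htH, ht, hsub⟩ := exists_subset_image_finite_and.1
    (hH (U '' H) (forall_mem_image.2 hU) hcover)
  exact ⟨t, htH, ht, sUnion_image U t ▸ hsub⟩

end Semimetric

open Semimetric

theorem statement8_general {X : Type*} (d : X → X → ℝ)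
    (hpos : ∀ x y, 0 ≤ d x y) (hsymm : ∀ x y, d x y = d y x)
    (hzero : ∀ x y, d x y = 0 ↔ x = y)
    (Φ : ℝ → ℝ → ℝ≥0∞) (hΦ : IsTriangleFun d Φ) (hreg : RegularAt00 Φ)
    (H : Set X) (hH : IsCompactS d H) :
    IsClosedS d H := by
  obtain ⟨-, -, h00, htri⟩ := hΦ
  intro p hp
  have hdp : ∀ x ∈ H, 0 < d x p := fun x hx =>
    (hpos x p).lt_of_ne' fun h => hp ((hzero x p).1 h ▸ hx)
  choose! δ hδ hdisj using fun x hx =>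
    exists_disjoint_balls hpos htri hreg h00 hsymm (hdp x hx)
  obtain ⟨t, htH, ht, hcover⟩ := hH.exists_finite_subcover
    (U := fun x => interiorS d (Ball d x (δ x)))
    (fun x _ => isOpenS_interiorS hpos htri hreg h00 _) fun x hx => ⟨δ x, hδ x hx, subset_rfl⟩
  obtain ⟨η, hη, hηδ⟩ := ht.exists_pos_forall_le fun x hx => hδ x (htH hx)
  refine ⟨η, hη, fun y (hyp : d y p < η) hyH => ?_⟩
  obtain ⟨x, hxt, hyx⟩ := mem_iUnion₂.1 (hcover hyH)
  have hself : ∀ x, d x x = 0 := fun x => (hzero x x).2 rfl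
  exact Set.disjoint_left.1 (hdisj x (htH hxt)) (interiorS_subset hself _ hyx)
    (hyp.trans_le (hηδ x hxt))

/-- compact subsets of complete regular semimetric spaces are closed. -/
theorem statement8 {X : Type*} (d : X → X → ℝ)
    (hpos : ∀ x y, 0 ≤ d x y) (hsymm : ∀ x y, d x y = d y x)
    (hzero : ∀ x y, d x y = 0 ↔ x = y)
    (hcomplete : IsCompleteS d)
    (Φ : ℝ → ℝ → ℝ≥0∞) (hΦ : IsTriangleFun d Φ) (hreg : RegularAt00 Φ)
    (H : Set X) (hH : IsCompactS d H) :
    IsClosedS d H :=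
  statement8_general d hpos hsymm hzero Φ hΦ hreg H hH
end

section
/- If (X,d) is a complete semimetric space with a real-valued upper semicontinuous triangle function Φ, then the semimetric space (F(X), D) of nonempty closed bounded subsets with the Hausdorff–Pompeiu distance is complete; moreover, the limit of a Cauchy sequence (A_n) is the set A = { x ∈ X : ∃ (x_k) with x_k ∈ A_k for all k and x_k → x } (Blaschke's theorem for semimetric spaces). -/
/-!
Upper semicontinuity of `Φ` at `(0, 0)` gives a uniform triangle inequality: for every `ε > 0`
there is `δ > 0` such that `d x z < δ` and `d z y < δ` imply `d x y < ε`. Iterating it yields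
scales `ε = E 0 > E 1 > ⋯ → 0` with `d x y < E k` whenever `d x z, d z y < E (k + 1)`, so a chain
with `d (y k) (y (k + 1)) < E (k + 2)` is Cauchy and stays within `E k` of its limit. Starting
from `a ∈ A n`, the Cauchy property of `(A n)` yields such a chain through later sets `A (M k)`;
its limit lies in the lower limit `A`, within `ε` of `a`. Conversely a point of `A` is a limit of
points of the `A j`, hence uniformly close to every late `A n`. These two approximations give
`D (A n, A) → 0` and the boundedness of `A`; closedness follows by choosing, in each `A n`, a point
nearly closest to a given point of the closure.
-/

open Set Filter Topology ENNReal

open Semimetric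

namespace Semimetric

variable {X : Type*} {d : X → X → ℝ}

def UniformTriangle (d : X → X → ℝ) : Prop :=
  ∀ ε > (0:ℝ), ∃ δ > (0:ℝ), ∀ x y z, d x z < δ → d z y < δ → d x y < ε

structure IsTriangleScale (d : X → X → ℝ) (E : ℕ → ℝ) : Prop where
  pos : ∀ k, 0 < E k
  antitone : Antitone E
  tendsto_zero : Tendsto E atTop (𝓝 0)
  dist_lt : ∀ k x y z, d x z < E (k + 1) → d z y < E (k + 1) → d x y < E k

def IsCauchySets (d : X → X → ℝ) (A : ℕ → Set X) : Prop :=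
  ∀ ε > (0:ℝ), ∃ N, ∀ m ≥ N, ∀ n ≥ N, ∀ a ∈ A m, ∃ b ∈ A n, d a b < ε

def lowerLimit (d : X → X → ℝ) (A : ℕ → Set X) : Set X :=
  {x : X | ∃ xk : ℕ → X, (∀ k, xk k ∈ A k) ∧ ConvTo d xk x}

section TriangleFunction

variable {Φ : ℝ → ℝ → ℝ}

theorem IsTriangleFunR.mono (hΦ : IsTriangleFunR d Φ) {u u' v v' : ℝ} (hu : 0 ≤ u)
    (huu' : u ≤ u') (hv : 0 ≤ v) (hvv' : v ≤ v') : Φ u v ≤ Φ u' v' := by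
  obtain ⟨hsymm, hmono, -⟩ := hΦ
  calc Φ u v ≤ Φ u' v := hmono u u' v hu huu' hv
    _ = Φ v u' := hsymm _ _
    _ ≤ Φ v' u' := hmono v v' u' hv hvv' (hu.trans huu')
    _ = Φ u' v' := hsymm _ _

theorem IsTriangleFunR.dist_le (hΦ : IsTriangleFunR d Φ) (hpos : ∀ x y, 0 ≤ d x y) {x y z : X}
    {u v : ℝ} (hu : d x z ≤ u) (hv : d z y ≤ v) : d x y ≤ Φ u v :=
  (hΦ.2.2.2.2 x y z).trans (hΦ.mono (hpos x z) hu (hpos z y) hv)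

theorem IsTriangleFunR.uniformTriangle (hΦ : IsTriangleFunR d Φ) (hpos : ∀ x y, 0 ≤ d x y)
    (husc : UpperSemicontinuousOn (fun p : ℝ × ℝ => Φ p.1 p.2) (Ici 0 ×ˢ Ici 0)) :
    UniformTriangle d := by
  intro ε hε
  have hdiag : Tendsto (fun δ : ℝ => (δ, δ)) (𝓝[>] 0) (𝓝[Ici 0 ×ˢ Ici 0] (0, 0)) := by
    refine tendsto_nhdsWithin_of_tendsto_nhds_of_eventually_within _
      ((continuous_id.prodMk continuous_id).tendsto' 0 _ rfl |>.mono_left nhdsWithin_le_nhds) ?_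
    filter_upwards [self_mem_nhdsWithin] with δ hδ
    exact ⟨mem_Ici.2 (le_of_lt hδ), mem_Ici.2 (le_of_lt hδ)⟩
  have hsmall := hdiag.eventually
    (husc (0, 0) ⟨self_mem_Ici, self_mem_Ici⟩ ε (by simpa [hΦ.2.2.2.1] using hε))
  obtain ⟨δ, hδΦ, hδ⟩ := (hsmall.and self_mem_nhdsWithin).exists
  exact ⟨δ, hδ, fun x y z hxz hzy => (hΦ.dist_le hpos hxz.le hzy.le).trans_lt hδΦ⟩

theorem BoundedS.of_forall_exists_dist_le (hΦ : IsTriangleFunR d Φ) (hpos : ∀ x y, 0 ≤ d x y)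
    (hsymm : ∀ x y, d x y = d y x) {B S : Set X} (hB : BoundedS d B) {r : ℝ}
    (hS : ∀ x ∈ S, ∃ b ∈ B, d x b ≤ r) : BoundedS d S := by
  obtain ⟨M, hM⟩ := hB
  refine ⟨Φ r (Φ M r), fun x hx y hy => ?_⟩
  obtain ⟨b, hb, hxb⟩ := hS x hx
  obtain ⟨c, hc, hyc⟩ := hS y hy
  exact hΦ.dist_le hpos hxb (hΦ.dist_le hpos (hM b hb c hc) (hsymm c y ▸ hyc))

end TriangleFunction

theorem UniformTriangle.exists_isTriangleScale (htri : UniformTriangle d) {ε : ℝ}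
    (hε : 0 < ε) : ∃ E : ℕ → ℝ, E 0 = ε ∧ IsTriangleScale d E := by
  have hstep : ∀ t : {t : ℝ // 0 < t}, ∃ s : {t : ℝ // 0 < t},
      s.1 ≤ t.1 / 2 ∧ ∀ x y z, d x z < s.1 → d z y < s.1 → d x y < t.1 := by
    rintro ⟨t, ht⟩
    obtain ⟨δ, hδ, hδt⟩ := htri t ht
    refine ⟨⟨min δ (t / 2), lt_min hδ (half_pos ht)⟩, min_le_right _ _,
      fun x y z hxz hzy => ?_⟩
    exact hδt x y z (hxz.trans_le (min_le_left _ _)) (hzy.trans_le (min_le_left _ _))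
  choose next hnext_le hnext using hstep
  set E : ℕ → ℝ := fun k => (next^[k] ⟨ε, hε⟩).1 with hE
  have hE_succ : ∀ k, E (k + 1) = (next (next^[k] ⟨ε, hε⟩)).1 := fun k => by
    simp only [hE, Function.iterate_succ_apply']
  have hhalf : ∀ k, E (k + 1) ≤ E k / 2 := fun k => hE_succ k ▸ hnext_le _
  have hpos : ∀ k, 0 < E k := fun k => (next^[k] ⟨ε, hε⟩).2
  have hgeom : ∀ k, E k ≤ ε * (1 / 2) ^ k := by
    intro k
    induction k with
    | zero => simp [hE]
    | succ k ih => rw [pow_succ]; linarith [hhalf k]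
  refine ⟨E, rfl, hpos, antitone_nat_of_succ_le fun k => by linarith [hhalf k, hpos k], ?_, ?_⟩
  · have hlim : Tendsto (fun k : ℕ => ε * (1 / 2 : ℝ) ^ k) atTop (𝓝 0) := by
      simpa using (tendsto_pow_atTop_nhds_zero_of_lt_one (by norm_num : (0:ℝ) ≤ 1 / 2)
        (by norm_num)).const_mul ε
    exact tendsto_of_tendsto_of_tendsto_of_le_of_le tendsto_const_nhds hlim
      (fun k => (hpos k).le) hgeom
  · intro k x y z hxz hzy
    exact hnext _ x y z (hE_succ k ▸ hxz) (hE_succ k ▸ hzy)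

theorem exists_dist_lt_of_HD_lt {B C : Set X} {δ : ℝ} (h : HD d B C < ENNReal.ofReal δ) {b : X}
    (hb : b ∈ B) : ∃ c ∈ C, d b c < δ := by
  obtain ⟨e, ⟨-, hBC, -⟩, he⟩ := sInf_lt_iff.mp h
  obtain ⟨c, hc, hbc⟩ := hBC b hb
  exact ⟨c, hc, (ENNReal.ofReal_lt_ofReal_iff'.mp (hbc.trans he)).1⟩

theorem HD_le_ofReal {B C : Set X} {ε : ℝ} (hε : 0 < ε)
    (hBC : ∀ b ∈ B, ∃ c ∈ C, d b c < ε) (hCB : ∀ c ∈ C, ∃ b ∈ B, d c b < ε) :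
    HD d B C ≤ ENNReal.ofReal ε := by
  refine sInf_le ⟨ENNReal.ofReal_pos.mpr hε, fun b hb => ?_, fun c hc => ?_⟩
  · obtain ⟨c, hc, h⟩ := hBC b hb
    exact ⟨c, hc, (ENNReal.ofReal_lt_ofReal_iff hε).mpr h⟩
  · obtain ⟨b, hb, h⟩ := hCB c hc
    exact ⟨b, hb, (ENNReal.ofReal_lt_ofReal_iff hε).mpr h⟩

theorem tendsto_HD_zero {A : ℕ → Set X} {B : Set X}
    (hAB : ∀ ε > (0:ℝ), ∃ N, ∀ n ≥ N, ∀ a ∈ A n, ∃ b ∈ B, d a b < ε)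
    (hBA : ∀ ε > (0:ℝ), ∃ N, ∀ n ≥ N, ∀ b ∈ B, ∃ a ∈ A n, d b a < ε) :
    Tendsto (fun n => HD d (A n) B) atTop (𝓝 0) := by
  refine ENNReal.tendsto_atTop_zero.mpr fun e he => ?_
  obtain ⟨ε, -, hε₀, hεe⟩ := ENNReal.lt_iff_exists_real_btwn.mp he
  have hε : 0 < ε := ENNReal.ofReal_pos.mp hε₀
  obtain ⟨N₁, hN₁⟩ := hAB ε hε
  obtain ⟨N₂, hN₂⟩ := hBA ε hε
  exact ⟨max N₁ N₂, fun n hn => (HD_le_ofReal hε (hN₁ n (le_of_max_le_left hn))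
    (hN₂ n (le_of_max_le_right hn))).trans hεe.le⟩

theorem isCauchySets_of_HD {A : ℕ → Set X}
    (h : ∀ ε : ℝ≥0∞, 0 < ε → ∃ N, ∀ m ≥ N, ∀ n ≥ N, HD d (A m) (A n) < ε) :
    IsCauchySets d A := by
  intro ε hε
  obtain ⟨N, hN⟩ := h (ENNReal.ofReal ε) (ENNReal.ofReal_pos.mpr hε)
  exact ⟨N, fun m hm n hn a ha => exists_dist_lt_of_HD_lt (hN m hm n hn) ha⟩

theorem exists_seq_mem_tendsto_zero {S : ℕ → Set X} (hS : ∀ n, (S n).Nonempty) {f : X → ℝ}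
    (hf : ∀ x, 0 ≤ f x) (h : ∀ ε > (0:ℝ), ∀ᶠ n in atTop, ∃ a ∈ S n, f a < ε) :
    ∃ w : ℕ → X, (∀ n, w n ∈ S n) ∧ Tendsto (fun n => f (w n)) atTop (𝓝 0) := by
  set r : ℕ → ℝ := fun n => sInf (f '' S n)
  have hlower : ∀ n, 0 ∈ lowerBounds (f '' S n) := by
    rintro n _ ⟨x, -, rfl⟩
    exact hf x
  have hw : ∀ n, ∃ w ∈ S n, f w < r n + 1 / (n + 1) := fun n => by
    obtain ⟨_, ⟨w, hw, rfl⟩, hlt⟩ :=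
      exists_lt_of_csInf_lt ((hS n).image f) (lt_add_of_pos_right (r n) Nat.one_div_pos_of_nat)
    exact ⟨w, hw, hlt⟩
  choose w hwS hwr using hw
  have hr : Tendsto r atTop (𝓝 0) := by
    refine tendsto_order.mpr ⟨fun a ha => Eventually.of_forall fun n =>
      ha.trans_le (le_csInf ((hS n).image f) (hlower n)), fun ε hε => ?_⟩
    filter_upwards [h ε hε] with n ⟨a, ha, hfa⟩
    exact (csInf_le ⟨0, hlower n⟩ ⟨a, ha, rfl⟩).trans_lt hfa
  have hbound : Tendsto (fun n : ℕ => r n + 1 / ((n : ℝ) + 1)) atTop (𝓝 0) := by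
    simpa using hr.add tendsto_one_div_add_atTop_nhds_zero_nat
  exact ⟨w, hwS, tendsto_of_tendsto_of_tendsto_of_le_of_le tendsto_const_nhds hbound
    (fun n => hf (w n)) (fun n => (hwr n).le)⟩

theorem exists_seq_of_forall_exists_mem {S : ℕ → Set X} {R : ℕ → X → X → Prop} {a : X}
    (ha : a ∈ S 0) (hstep : ∀ k, ∀ z ∈ S k, ∃ w ∈ S (k + 1), R k z w) :
    ∃ y : ℕ → X, y 0 = a ∧ (∀ k, y k ∈ S k) ∧ ∀ k, R k (y k) (y (k + 1)) := by
  choose! next hnextS hnextR using hstep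
  let y : ℕ → X := fun k => Nat.rec a (fun k z => next k z) k
  have hyS : ∀ k, y k ∈ S k := fun k => by
    induction k with
    | zero => exact ha
    | succ k ih => exact hnextS k (y k) ih
  exact ⟨y, rfl, hyS, fun k => hnextR k (y k) (hyS k)⟩

namespace IsTriangleScale

variable {E : ℕ → ℝ}

theorem dist_lt_of_lt (hE : IsTriangleScale d E) {y : ℕ → X}
    (hy : ∀ k, d (y k) (y (k + 1)) < E (k + 2)) {k l : ℕ} (hkl : k < l) :
    d (y k) (y l) < E (k + 1) := by
  have key : ∀ m k, d (y k) (y (k + 1 + m)) < E (k + 1) := by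
    intro m
    induction m with
    | zero => exact fun k => (hy k).trans_le (hE.antitone (Nat.le_succ _))
    | succ m ih =>
      intro k
      refine hE.dist_lt (k + 1) _ _ (y (k + 1)) (hy k) ?_
      simpa only [add_assoc, add_comm 1 m] using ih (k + 1)
  simpa [show k + 1 + (l - (k + 1)) = l by omega] using key (l - (k + 1)) k

theorem exists_dist_lt (hE : IsTriangleScale d E) (hsymm : ∀ x y, d x y = d y x)
    (hzero : ∀ x y, d x y = 0 ↔ x = y) (hcomplete : IsCompleteS d) {y : ℕ → X}
    (hy : ∀ k, d (y k) (y (k + 1)) < E (k + 2)) : ∃ x, ∀ k, d (y k) x < E k := by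
  have hcauchy : IsCauchyS d y := by
    intro t ht
    obtain ⟨K, hK⟩ := (hE.tendsto_zero.eventually (gt_mem_nhds ht)).exists
    refine ⟨K, fun m hm l hl => ?_⟩
    rcases lt_trichotomy m l with hml | rfl | hlm
    · exact (hE.dist_lt_of_lt hy hml).trans_le (hE.antitone (by omega)) |>.trans hK
    · exact ((hzero _ _).mpr rfl).trans_lt ht
    · rw [hsymm]
      exact (hE.dist_lt_of_lt hy hlm).trans_le (hE.antitone (by omega)) |>.trans hK
  obtain ⟨x, hx⟩ := hcomplete y hcauchy
  refine ⟨x, fun k => ?_⟩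
  obtain ⟨l, hlx, hkl⟩ :=
    ((hx.eventually (gt_mem_nhds (hE.pos (k + 1)))).and (eventually_gt_atTop k)).exists
  exact hE.dist_lt k _ _ _ (hE.dist_lt_of_lt hy hkl) hlx

end IsTriangleScale

section LowerLimit

variable {A : ℕ → Set X}

theorem mem_lowerLimit_of_forall_eventually (hpos : ∀ x y, 0 ≤ d x y)
    (hne : ∀ n, (A n).Nonempty) {x : X}
    (h : ∀ ε > (0:ℝ), ∀ᶠ n in atTop, ∃ a ∈ A n, d a x < ε) :
    x ∈ lowerLimit d A :=
  exists_seq_mem_tendsto_zero hne (fun a => hpos a x) h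

theorem IsCauchySets.exists_dist_lt_of_mem_lowerLimit (hA : IsCauchySets d A)
    (htri : UniformTriangle d) (hsymm : ∀ x y, d x y = d y x) {ε : ℝ} (hε : 0 < ε) :
    ∃ N, ∀ n ≥ N, ∀ x ∈ lowerLimit d A, ∃ a ∈ A n, d x a < ε := by
  obtain ⟨δ, hδ, hδε⟩ := htri ε hε
  obtain ⟨N, hN⟩ := hA δ hδ
  refine ⟨N, fun n hn x ⟨xk, hxkA, hxk⟩ => ?_⟩
  obtain ⟨j, hjx, hnj⟩ :=
    ((hxk.eventually (gt_mem_nhds hδ)).and (eventually_ge_atTop n)).exists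
  obtain ⟨a, ha, hja⟩ := hN j (hn.trans hnj) n hn (xk j) (hxkA j)
  exact ⟨a, ha, hδε x a (xk j) (hsymm x _ ▸ hjx) hja⟩

theorem IsCauchySets.isClosedS_lowerLimit (hA : IsCauchySets d A) (htri : UniformTriangle d)
    (hpos : ∀ x y, 0 ≤ d x y) (hsymm : ∀ x y, d x y = d y x) (hne : ∀ n, (A n).Nonempty) :
    IsClosedS d (lowerLimit d A) := by
  intro p hp
  by_contra! hball
  refine hp (mem_lowerLimit_of_forall_eventually hpos hne fun ε hε => ?_)
  obtain ⟨δ, hδ, hδε⟩ := htri ε hε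
  obtain ⟨q, hqp, hq⟩ := not_subset.mp (hball δ hδ)
  obtain ⟨N, hN⟩ := hA.exists_dist_lt_of_mem_lowerLimit htri hsymm hδ
  filter_upwards [eventually_ge_atTop N] with n hn
  obtain ⟨a, ha, hqa⟩ := hN n hn q (not_not.mp hq)
  exact ⟨a, ha, hδε a p q (hsymm a q ▸ hqa) hqp⟩

theorem IsCauchySets.exists_mem_lowerLimit_dist_lt (hA : IsCauchySets d A)
    (htri : UniformTriangle d) (hpos : ∀ x y, 0 ≤ d x y) (hsymm : ∀ x y, d x y = d y x)
    (hzero : ∀ x y, d x y = 0 ↔ x = y) (hcomplete : IsCompleteS d) (hne : ∀ n, (A n).Nonempty)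
    {ε : ℝ} (hε : 0 < ε) :
    ∃ N, ∀ n ≥ N, ∀ a ∈ A n, ∃ x ∈ lowerLimit d A, d a x < ε := by
  obtain ⟨E, hE0, hE⟩ := htri.exists_isTriangleScale hε
  obtain ⟨φ, hφ, hφA⟩ := extraction_forall_of_eventually' fun k =>
    (hA (E (k + 2)) (hE.pos _)).imp fun N hN N' hN' m hm n hn =>
      hN m (hN'.trans hm) n (hN'.trans hn)
  refine ⟨φ 0, fun n hn a ha => ?_⟩
  -- `M 0 = n`, and `A (M k)` is `E (k + 2)`-close to `A (M (k + 1))`: both indices are `≥ φ k`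
  set M : ℕ → ℕ := fun k => max n (φ k)
  obtain ⟨y, hy0, hyA, hy⟩ := exists_seq_of_forall_exists_mem (S := fun k => A (M k))
    (R := fun k z w => d z w < E (k + 2)) (by simpa [M, max_eq_left hn] using ha)
    fun k z hz => hφA k (M k) (le_max_right _ _) (M (k + 1))
      ((hφ.monotone k.le_succ).trans (le_max_right _ _)) z hz
  obtain ⟨x, hyx⟩ := hE.exists_dist_lt hsymm hzero hcomplete hy
  refine ⟨x, mem_lowerLimit_of_forall_eventually hpos hne fun t ht => ?_, hy0 ▸ hE0 ▸ hyx 0⟩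
  obtain ⟨δ, hδ, hδt⟩ := htri t ht
  obtain ⟨K, hK⟩ := (hE.tendsto_zero.eventually (gt_mem_nhds hδ)).exists
  filter_upwards [eventually_ge_atTop (M K)] with j hj
  obtain ⟨b, hb, hyb⟩ :=
    hφA K (M K) (le_max_right _ _) j ((le_max_right _ _).trans hj) _ (hyA K)
  have hyb : d (y K) b < δ := hyb.trans_le (hE.antitone (Nat.le_add_right K 2)) |>.trans hK
  exact ⟨b, hb, hδt b x (y K) (hsymm b _ ▸ hyb) ((hyx K).trans hK)⟩

end LowerLimit

end Semimetric

/-- Blaschke's theorem: (F(X), D) is complete, with the limit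
of a Cauchy sequence given explicitly. -/
theorem statement14 {X : Type*} (d : X → X → ℝ)
    (hpos : ∀ x y, 0 ≤ d x y) (hsymm : ∀ x y, d x y = d y x)
    (hzero : ∀ x y, d x y = 0 ↔ x = y)
    (hcomplete : IsCompleteS d)
    (Φ : ℝ → ℝ → ℝ) (hΦ : IsTriangleFunR d Φ)
    (husc : UpperSemicontinuousOn (fun p : ℝ × ℝ => Φ p.1 p.2) (Set.Ici 0 ×ˢ Set.Ici 0))
    (A : ℕ → Set X)
    (hA : ∀ n, (A n).Nonempty ∧ IsClosedS d (A n) ∧ BoundedS d (A n))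
    (hCauchy : ∀ ε : ℝ≥0∞, 0 < ε → ∃ N, ∀ m ≥ N, ∀ n ≥ N, HD d (A m) (A n) < ε) :
    (({x : X | ∃ xk : ℕ → X, (∀ k, xk k ∈ A k) ∧ ConvTo d xk x}).Nonempty ∧
      IsClosedS d {x : X | ∃ xk : ℕ → X, (∀ k, xk k ∈ A k) ∧ ConvTo d xk x} ∧
      BoundedS d {x : X | ∃ xk : ℕ → X, (∀ k, xk k ∈ A k) ∧ ConvTo d xk x}) ∧
    Tendsto (fun n => HD d (A n)
        {x : X | ∃ xk : ℕ → X, (∀ k, xk k ∈ A k) ∧ ConvTo d xk x})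
      atTop (nhds 0) := by
  have htri := hΦ.uniformTriangle hpos husc
  have hAc := isCauchySets_of_HD hCauchy
  have hne n := (hA n).1
  have approx_A ε (hε : 0 < ε) :=
    hAc.exists_mem_lowerLimit_dist_lt htri hpos hsymm hzero hcomplete hne hε
  have approx_lim ε (hε : 0 < ε) := hAc.exists_dist_lt_of_mem_lowerLimit htri hsymm hε
  refine ⟨⟨?_, hAc.isClosedS_lowerLimit htri hpos hsymm hne, ?_⟩,
    tendsto_HD_zero approx_A approx_lim⟩
  · obtain ⟨N, hN⟩ := approx_A 1 one_pos
    obtain ⟨a, ha⟩ := hne N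
    obtain ⟨x, hx, -⟩ := hN N le_rfl a ha
    exact ⟨x, hx⟩
  · obtain ⟨N, hN⟩ := approx_lim 1 one_pos
    exact (hA N).2.2.of_forall_exists_dist_le hΦ hpos hsymm fun x hx =>
      (hN N le_rfl x hx).imp fun a ⟨ha, hxa⟩ => ⟨ha, hxa.le⟩
end

section
/- Let T be a φ-contraction on a complete regular semimetric space with triangle function Φ, x₀ its unique fixed point, and (x_k) the Picard iteration x₁ := x, x_{k+1} := T(x_k). Then for all k and all ℓ ∈ {1,…,k}, d(x_k, x₀) ≤ ψ(φ^{k−ℓ}(d(x_ℓ, x_{ℓ+1}))), and moreover d(x_k, x₀) ≤ φ(d(x_{k−1}, x₀)), where ψ(t) := sup{ s ≥ 0 : s ≤ Φ(t, φ(s)) }. -/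
/-!
Consecutive Picard steps shrink under the contraction: `d(x_k, x_{k+1}) ≤ φ^{k-ℓ}(d(x_ℓ, x_{ℓ+1}))`.
For `s = d(x_k, x₀)` the triangle function and `d(x_{k+1}, x₀) ≤ φ(s)` give
`s ≤ Φ(d(x_k, x_{k+1}), φ(s)) ≤ Φ(φ^{k-ℓ}(d(x_ℓ, x_{ℓ+1})), φ(s))`,
so `s` belongs to the set whose supremum defines `ψ`.
-/

open Set Filter Topology ENNReal

namespace Semimetric

variable {X : Type*} {d : X → X → ℝ} {Φ : ℝ → ℝ → ℝ≥0∞} {φ : ℝ → ℝ} {T : X → X}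

theorem IsTriangleFun.mono_right (hΦ : IsTriangleFun d Φ) {u v₁ v₂ : ℝ} (hu : 0 ≤ u)
    (hv₁ : 0 ≤ v₁) (hv : v₁ ≤ v₂) : Φ u v₁ ≤ Φ u v₂ := by
  rw [hΦ.1 u v₁, hΦ.1 u v₂]
  exact hΦ.2.1 v₁ v₂ u hv₁ hv hu

theorem IsComparison.monotoneOn (hφ : IsComparison φ) : MonotoneOn φ (Ici 0) :=
  fun s hs _ _ hst => hφ.2.1 s _ hs hst

theorem ofReal_le_Psi {s t : ℝ} (hs : 0 ≤ s) (h : ENNReal.ofReal s ≤ Φ t (φ s)) :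
    ENNReal.ofReal s ≤ Psi Φ φ t :=
  le_sSup ⟨s, hs, h, rfl⟩

theorem IsContraction.dist_fixedPoint_le (hT : IsContraction d φ T) {x₀ : X} (hfix : T x₀ = x₀)
    (y : X) : d (T y) x₀ ≤ φ (d y x₀) := by
  simpa only [hfix] using hT y x₀

theorem IsContraction.ofReal_dist_fixedPoint_le_Psi (hpos : ∀ x y, 0 ≤ d x y)
    (hΦ : IsTriangleFun d Φ) (hT : IsContraction d φ T) {x₀ : X} (hfix : T x₀ = x₀) {y : X}
    {t : ℝ} (hyt : d y (T y) ≤ t) : ENNReal.ofReal (d y x₀) ≤ Psi Φ φ t := by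
  have ht : 0 ≤ t := (hpos _ _).trans hyt
  refine ofReal_le_Psi (hpos _ _) ?_
  calc ENNReal.ofReal (d y x₀) ≤ Φ (d y (T y)) (d (T y) x₀) := hΦ.2.2.2 _ _ _
    _ ≤ Φ t (d (T y) x₀) := hΦ.2.1 _ _ _ (hpos _ _) hyt (hpos _ _)
    _ ≤ Φ t (φ (d y x₀)) := hΦ.mono_right ht (hpos _ _) (hT.dist_fixedPoint_le hfix y)

theorem IsContraction.dist_succ_le_iterate (hpos : ∀ x y, 0 ≤ d x y)
    (hφ : MonotoneOn φ (Ici 0)) (hT : IsContraction d φ T) {x : ℕ → X}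
    (hiter : ∀ k, x (k + 1) = T (x k)) (ℓ m : ℕ) :
    d (x (ℓ + m)) (x (ℓ + m + 1)) ≤ φ^[m] (d (x ℓ) (x (ℓ + 1))) := by
  induction m with
  | zero => rfl
  | succ m ih =>
    calc d (x (ℓ + (m + 1))) (x (ℓ + (m + 1) + 1))
        = d (T (x (ℓ + m))) (T (x (ℓ + m + 1))) := by rw [← hiter, ← hiter]; rfl
      _ ≤ φ (d (x (ℓ + m)) (x (ℓ + m + 1))) := hT _ _
      _ ≤ φ (φ^[m] (d (x ℓ) (x (ℓ + 1)))) := hφ (hpos _ _) ((hpos _ _).trans ih) ih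
      _ = φ^[m + 1] (d (x ℓ) (x (ℓ + 1))) := (Function.iterate_succ_apply' φ m _).symm

end Semimetric

open Semimetric
theorem statement17_general {X : Type*} (d : X → X → ℝ)
    (hpos : ∀ x y, 0 ≤ d x y)
    (Φ : ℝ → ℝ → ℝ≥0∞) (hΦ : IsTriangleFun d Φ)
    (φ : ℝ → ℝ) (hφ : IsComparison φ)
    (T : X → X) (hT : IsContraction d φ T)
    (x₀ : X) (hfix : T x₀ = x₀)
    (x : ℕ → X) (hiter : ∀ k, x (k + 1) = T (x k)) :
    (∀ k ℓ : ℕ, ℓ ≤ k →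
        ENNReal.ofReal (d (x k) x₀) ≤ Psi Φ φ (φ^[k - ℓ] (d (x ℓ) (x (ℓ + 1))))) ∧
    (∀ k : ℕ, d (x (k + 1)) x₀ ≤ φ (d (x k) x₀)) := by
  refine ⟨fun k ℓ hℓ => ?_, fun k => hiter k ▸ hT.dist_fixedPoint_le hfix (x k)⟩
  apply hT.ofReal_dist_fixedPoint_le_Psi hpos hΦ hfix
  have hstep := hT.dist_succ_le_iterate hpos hφ.monotoneOn hiter ℓ (k - ℓ)
  rwa [Nat.add_sub_cancel' hℓ, hiter k] at hstep

/-- a priori/a posteriori error estimates and convergence speed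
for the Picard iteration. -/
theorem statement17 {X : Type*} (d : X → X → ℝ)
    (hpos : ∀ x y, 0 ≤ d x y) (hsymm : ∀ x y, d x y = d y x)
    (hzero : ∀ x y, d x y = 0 ↔ x = y)
    (hcomplete : IsCompleteS d)
    (Φ : ℝ → ℝ → ℝ≥0∞) (hΦ : IsTriangleFun d Φ) (hreg : RegularAt00 Φ)
    (φ : ℝ → ℝ) (hφ : IsComparison φ)
    (T : X → X) (hT : IsContraction d φ T)
    (x₀ : X) (hfix : T x₀ = x₀)
    (x : ℕ → X) (hiter : ∀ k, x (k + 1) = T (x k)) :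
    (∀ k ℓ : ℕ, ℓ ≤ k →
        ENNReal.ofReal (d (x k) x₀) ≤ Psi Φ φ (φ^[k - ℓ] (d (x ℓ) (x (ℓ + 1))))) ∧
    (∀ k : ℕ, d (x (k + 1)) x₀ ≤ φ (d (x k) x₀)) :=
  statement17_general d hpos Φ hΦ φ hφ T hT x₀ hfix x hiter
end
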